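/- arXiv:2201.12842 — 2 statements merged into one kernel-verified Lean document; each statement's English description precedes it below -/
import Mathlib

section
/- For any positive integers κ ≥ 1, any α with 1 ≤ α ≤ κ, and any multi-indices, the mixed partial derivative ∂^{m+1} F^o_{A_κ}/(∂t_α ∂t_{κ+1-β_1}...∂t_{κ+1-β_m}) evaluated at all variables 0 equals (m-1)! if m + Σ_{i=1}^m β_i = α, and 0 otherwise. In particular this value is independent of κ. -/
open MvPolynomial

/-- `F` is the genus-zero open potential of type `A_κ`, characterized by its iterated
partial derivatives at `0`. -/
def OpenAPotential (κ : ℕ) (F : MvPolynomial (Fin (κ + 1)) ℚ) : Prop :=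
  ∀ (m k : ℕ) (α : Fin m → Fin (κ + 1)), (∀ i, α i ≠ 0) →
    MvPolynomial.eval (fun _ => (0 : ℚ))
      ((List.ofFn α ++ List.replicate k (0 : Fin (κ + 1))).foldr
        (fun i p => MvPolynomial.pderiv i p) F)
    = if (∑ i, (κ + 2 - (α i : ℕ))) + k = κ + 2 then ((m + k - 2).factorial : ℚ) else 0

theorem OpenAPotential.eval_foldr_pderiv_ofFn {κ : ℕ} {F : MvPolynomial (Fin (κ + 1)) ℚ}
    (hF : OpenAPotential κ F) {m : ℕ} (α : Fin m → Fin (κ + 1)) (hα : ∀ i, α i ≠ 0) :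
    eval (fun _ => (0 : ℚ)) ((List.ofFn α).foldr (fun i p => pderiv i p) F)
      = if ∑ i, (κ + 2 - (α i : ℕ)) = κ + 2 then ((m - 2).factorial : ℚ) else 0 := by
  simpa using hF m 0 α hα

theorem sum_add_one_sub_sub {m : ℕ} (n : ℕ) (β : Fin m → ℕ) (hβ : ∀ i, β i ≤ n) :
    ∑ i, (n + 1 - (n - β i)) = m + ∑ i, β i := by
  rw [Finset.sum_congr rfl fun i _ => (by have := hβ i; omega : n + 1 - (n - β i) = 1 + β i),
    Finset.sum_add_distrib]
  simp

/-- for `1 ≤ α ≤ κ` and `1 ≤ β_i ≤ κ`, the derivative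
`∂^{m+1} F^o_{A_κ}/(∂t_α ∂t_{κ+1-β_1} ⋯ ∂t_{κ+1-β_m})` at `0` equals `(m-1)!`
if `m + ∑ β_i = α` and `0` otherwise; in particular it does not depend on `κ`. -/
theorem openA_derivatives_stable (κ : ℕ)
    (F : MvPolynomial (Fin (κ + 1)) ℚ) (hF : OpenAPotential κ F)
    (m : ℕ) (α : ℕ) (hα1 : 1 ≤ α) (hα2 : α ≤ κ)
    (β : Fin m → ℕ) (hβ : ∀ i, 1 ≤ β i ∧ β i ≤ κ) :
    MvPolynomial.eval (fun _ => (0 : ℚ))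
      ((((⟨α, by omega⟩ : Fin (κ + 1)) ::
          List.ofFn (fun i => (⟨κ + 1 - β i, by have := hβ i; omega⟩ : Fin (κ + 1))))).foldr
        (fun i p => MvPolynomial.pderiv i p) F)
    = if m + ∑ i, β i = α then ((m - 1).factorial : ℚ) else 0 := by
  set a : Fin (κ + 1) := ⟨α, by omega⟩
  set b : Fin m → Fin (κ + 1) := fun i => ⟨κ + 1 - β i, by have := hβ i; omega⟩
  have hab : ∀ i, (Fin.cons a b : Fin (m + 1) → Fin (κ + 1)) i ≠ 0 := by
    refine Fin.cases ?_ fun i => ?_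
    · simp [a, Fin.ext_iff]; omega
    · simp [b, Fin.ext_iff]; have := hβ i; omega
  have hweight : ∑ i, (κ + 2 - ((Fin.cons a b : Fin (m + 1) → Fin (κ + 1)) i : ℕ))
      = κ + 2 - α + (m + ∑ i, β i) := by
    rw [Fin.sum_univ_succ]
    simpa [a, b] using sum_add_one_sub_sub (κ + 1) β fun i => by have := hβ i; omega
  rw [← List.ofFn_cons, hF.eval_foldr_pderiv_ofFn _ hab, hweight]
  -- `congr 1` closes `(m + 1 - 2)! = (m - 1)!` by `rfl`, leaving the conditions
  congr 1
  exact propext (by omega)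
end

section
/- Let P_{ij}(γ_1,...,γ_m) denote the number of pairs of compositions (i_1,...,i_m) of i and (j_1,...,j_m) of j with i_k + j_k = γ_k + 1 for all k. Then the coefficient of z^{-i}w^{-j} (i,j ≥ 1) in the formal power series identity e^{D(z)D(w)f} = 1 - (D(z)∂_1 f - D(w)∂_1 f)/(z-w), after the change of variables t_k → t_k/k, gives ∂_i∂_j f = Σ_{m≥1} ((-1)^{m-1}/m) Σ_{γ_1+...+γ_m = i+j-m} P_{ij}(γ_1,...,γ_m) Π_{k=1}^m ∂_1∂_{γ_k} f. -/
open PowerSeries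

variable {R : Type*} [CommRing R] [Algebra ℚ R]

/-- After the change of variables `t_k → t_k/k`, the operator `D(z)` becomes
`D(z) g = ∑_{k≥1} z^{-k} ∂_k g` (no division by `k`); here written as a power
series in `u = z^{-1}`. -/
noncomputable def Dop' (d : ℕ → R → R) (g : R) : PowerSeries R :=
  PowerSeries.mk fun n => if n = 0 then 0 else d n g

/-- `D(z)D(w) f` (in the rescaled variables), as a power series in `v = w^{-1}`
(outer variable) with coefficients power series in `u = z^{-1}` (inner variable). -/
noncomputable def DD' (d : ℕ → R → R) (f : R) : PowerSeries (PowerSeries R) :=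
  PowerSeries.mk fun n => PowerSeries.mk fun m =>
    if n = 0 ∨ m = 0 then 0 else d n (d m f)

/-- `exp` of a power series with zero constant term, defined coefficientwise. -/
noncomputable def expPS {A : Type*} [CommRing A] [Algebra ℚ A] (u : PowerSeries A) :
    PowerSeries A :=
  PowerSeries.mk fun n =>
    ∑ m ∈ Finset.range (n + 1), (1 / (m.factorial : ℚ)) • PowerSeries.coeff (R := A) n (u ^ m)

/-- Compositions of `s` into `m` positive parts. -/
def comps (m s : ℕ) : Finset (Fin m → ℕ) :=
  Finset.filter (fun γ : Fin m → ℕ => (∀ i, 1 ≤ γ i) ∧ ∑ i, γ i = s)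
    (Fintype.piFinset fun _ : Fin m => Finset.range (s + 1))

/-- `P_{ij}(γ_1,…,γ_m)`: the number of pairs of compositions `(i_1,…,i_m)` of `i`
and `(j_1,…,j_m)` of `j` (into positive parts) with `i_k + j_k = γ_k + 1` for all `k`. -/
def P (i j : ℕ) {m : ℕ} (γ : Fin m → ℕ) : ℕ :=
  (Finset.filter
    (fun p : (Fin m → ℕ) × (Fin m → ℕ) => ∀ k, p.1 k + p.2 k = γ k + 1)
    ((comps m i) ×ˢ (comps m j))).card

/-!
With `u = z⁻¹`, `v = w⁻¹` and `g k = ∂₁∂ₖ f`, the right-hand side of the Fay identity is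
`(v - u) (1 + T)` with `T = ∑_{n,m ≥ 1} g (n + m - 1) vⁿ uᵐ`. Cancelling the non-zero-divisor
`v - u` gives `exp (D(z)D(w)f) = 1 + T`, hence `D(z)D(w)f = log (1 + T) = ∑ (-1)^(m-1)/m Tᵐ`.
The coefficient of `uʲ vⁱ` in `Tᵐ` is a sum over
pairs of compositions `(iₖ)` of `i` and `(jₖ)` of `j`; grouping them by `γₖ = iₖ + jₖ - 1`
produces the multiplicities `P i j γ`.
-/

open Finset

section CompSeries

variable {A : Type*} [CommRing A]

lemma X_pow_dvd_pow_of_constantCoeff_eq_zero {T : A⟦X⟧} (hT : constantCoeff T = 0) (m : ℕ) :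
    (X : A⟦X⟧) ^ m ∣ T ^ m :=
  pow_dvd_pow_of_dvd (X_dvd_iff.2 hT) m

lemma eq_zero_of_forall_X_pow_dvd {f : A⟦X⟧} (h : ∀ N, (X : A⟦X⟧) ^ N ∣ f) : f = 0 := by
  ext n
  exact X_pow_dvd_iff.1 (h (n + 1)) n (Nat.lt_succ_self n)

lemma X_pow_dvd_derivative {f : A⟦X⟧} {N : ℕ} (h : (X : A⟦X⟧) ^ (N + 1) ∣ f) :
    (X : A⟦X⟧) ^ N ∣ d⁄dX A f := by
  obtain ⟨g, rfl⟩ := h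
  rw [Derivation.leibniz, derivative_pow, derivative_X, smul_eq_mul, smul_eq_mul,
    Nat.add_sub_cancel]
  exact dvd_add (Dvd.intro (X * d⁄dX A g) (by ring))
    (Dvd.intro (((N + 1 : ℕ) : A⟦X⟧) * g) (by ring))

variable [Algebra ℚ A]

/-- `∑ₘ c m • T ^ m`, with the `n`-th coefficient summed over `m ≤ n` only: this is the true
composite only when `constantCoeff T = 0`. -/
noncomputable def compSeries (c : ℕ → ℚ) (T : A⟦X⟧) : A⟦X⟧ :=
  mk fun n => ∑ m ∈ range (n + 1), c m • coeff n (T ^ m)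

lemma constantCoeff_compSeries (c : ℕ → ℚ) (T : A⟦X⟧) :
    constantCoeff (compSeries c T) = algebraMap ℚ A (c 0) := by
  rw [← coeff_zero_eq_constantCoeff_apply, compSeries, coeff_mk]
  simp [Algebra.smul_def]

lemma X_pow_dvd_compSeries_sub {T : A⟦X⟧} (hT : constantCoeff T = 0) (c : ℕ → ℚ) (N : ℕ) :
    (X : A⟦X⟧) ^ N ∣ compSeries c T - ∑ m ∈ range N, c m • T ^ m := by
  refine X_pow_dvd_iff.2 fun n hn => ?_
  have hvanish : ∀ m, n < m → coeff n (T ^ m) = 0 := fun m hm =>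
    X_pow_dvd_iff.1 (X_pow_dvd_pow_of_constantCoeff_eq_zero hT m) n hm
  rw [map_sub, map_sum, compSeries, coeff_mk, sub_eq_zero]
  simp only [coeff_smul]
  refine sum_subset (fun m hm => ?_) (fun m _ hm => ?_)
  · simp only [mem_range] at hm ⊢; omega
  · rw [hvanish m (by simpa using hm), smul_zero]

lemma derivative_sum_range_smul_pow (c : ℕ → ℚ) (T : A⟦X⟧) (N : ℕ) :
    d⁄dX A (∑ m ∈ range (N + 1), c m • T ^ m)
      = (∑ m ∈ range N, (((m : ℚ) + 1) * c (m + 1)) • T ^ m) * d⁄dX A T := by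
  rw [map_sum, sum_range_succ', sum_mul, pow_zero,
    Derivation.map_smul_of_tower, Derivation.map_one_eq_zero, smul_zero, add_zero]
  refine sum_congr rfl fun m _ => ?_
  rw [Derivation.map_smul_of_tower, derivative_pow, Nat.add_sub_cancel]
  simp only [Algebra.smul_def, map_mul, map_add, map_natCast, map_one, Nat.cast_add,
    Nat.cast_one]
  ring

lemma derivative_compSeries {T : A⟦X⟧} (hT : constantCoeff T = 0) (c : ℕ → ℚ) :
    d⁄dX A (compSeries c T)
      = compSeries (fun m => ((m : ℚ) + 1) * c (m + 1)) T * d⁄dX A T := by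
  rw [← sub_eq_zero]
  refine eq_zero_of_forall_X_pow_dvd fun N => ?_
  have hsplit : d⁄dX A (compSeries c T)
        - compSeries (fun m => ((m : ℚ) + 1) * c (m + 1)) T * d⁄dX A T
      = d⁄dX A (compSeries c T - ∑ m ∈ range (N + 1), c m • T ^ m)
        - (compSeries (fun m => ((m : ℚ) + 1) * c (m + 1)) T
            - ∑ m ∈ range N, (((m : ℚ) + 1) * c (m + 1)) • T ^ m) * d⁄dX A T := by
    rw [map_sub, derivative_sum_range_smul_pow]; ring
  rw [hsplit]
  exact dvd_sub (X_pow_dvd_derivative (X_pow_dvd_compSeries_sub hT c (N + 1)))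
    (dvd_mul_of_dvd_left (X_pow_dvd_compSeries_sub hT _ N) _)

lemma derivative_expPS {S : A⟦X⟧} (hS : constantCoeff S = 0) :
    d⁄dX A (expPS S) = expPS S * d⁄dX A S := by
  have hc : (fun m : ℕ => ((m : ℚ) + 1) * (1 / ((m + 1).factorial : ℚ)))
      = fun m => 1 / (m.factorial : ℚ) := by
    funext m
    rw [Nat.factorial_succ, Nat.cast_mul]
    field_simp
    push_cast; ring
  rw [expPS, ← compSeries, derivative_compSeries hS, hc]

/-- `log (1 + T)`; the `m = 0` term vanishes because `1 / 0 = 0` in `ℚ`. -/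
noncomputable def logOneAdd (T : A⟦X⟧) : A⟦X⟧ :=
  compSeries (fun m => (-1) ^ (m - 1) / m) T

lemma one_add_mul_compSeries_neg_one_pow {T : A⟦X⟧} (hT : constantCoeff T = 0) :
    (1 + T) * compSeries (fun m => (-1) ^ m) T = 1 := by
  rw [← sub_eq_zero]
  refine eq_zero_of_forall_X_pow_dvd fun N => ?_
  have hgeom : (1 + T) * ∑ m ∈ range N, ((-1 : ℚ) ^ m) • T ^ m = 1 - (-T) ^ N := by
    have hterm : ∀ m, ((-1 : ℚ) ^ m) • T ^ m = (-T) ^ m := fun m => by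
      rw [Algebra.smul_def, map_pow, map_neg, map_one, ← mul_pow, neg_one_mul]
    simp only [hterm]
    simpa using mul_neg_geom_sum (-T) N
  have hsplit : (1 + T) * compSeries (fun m => (-1) ^ m) T - 1
      = (1 + T) * (compSeries (fun m => (-1) ^ m) T - ∑ m ∈ range N, ((-1 : ℚ) ^ m) • T ^ m)
        - (-T) ^ N := by
    rw [mul_sub, hgeom]; ring
  rw [hsplit]
  exact dvd_sub (dvd_mul_of_dvd_right (X_pow_dvd_compSeries_sub hT _ N) _)
    (X_pow_dvd_pow_of_constantCoeff_eq_zero (by simp [hT]) N)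

lemma one_add_mul_derivative_logOneAdd {T : A⟦X⟧} (hT : constantCoeff T = 0) :
    (1 + T) * d⁄dX A (logOneAdd T) = d⁄dX A T := by
  have hc : (fun m : ℕ => ((m : ℚ) + 1) * ((-1) ^ (m + 1 - 1) / ((m + 1 : ℕ) : ℚ)))
      = fun m => (-1) ^ m := by
    funext m
    push_cast
    field_simp
  rw [logOneAdd, derivative_compSeries hT, hc, ← mul_assoc,
    one_add_mul_compSeries_neg_one_pow hT, one_mul]

/-- Both sides solve `(1 + T) * L' = T'` with `L(0) = 0`. -/
lemma eq_logOneAdd_of_expPS_eq {S T : A⟦X⟧} (hS : constantCoeff S = 0)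
    (hT : constantCoeff T = 0) (h : expPS S = 1 + T) : S = logOneAdd T := by
  have : IsAddTorsionFree A := IsAddTorsionFree.of_module_rat A
  have hunit : IsUnit (1 + T) := by
    rw [isUnit_iff_constantCoeff]; simp [hT]
  refine derivative.ext (hunit.mul_left_cancel ?_) ?_
  · rw [one_add_mul_derivative_logOneAdd hT, ← h, ← derivative_expPS hS, h, map_add,
      derivative_one, zero_add]
  · simp [hS, logOneAdd, constantCoeff_compSeries]

end CompSeries

section Comps

lemma mem_comps {m s : ℕ} {γ : Fin m → ℕ} :
    γ ∈ comps m s ↔ (∀ k, 1 ≤ γ k) ∧ ∑ k, γ k = s := by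
  refine mem_filter.trans ⟨fun h => h.2, fun h => ⟨?_, h⟩⟩
  simp only [Fintype.mem_piFinset, mem_range, Nat.lt_succ_iff]
  exact fun k => h.2 ▸ single_le_sum (fun k _ => Nat.zero_le (γ k)) (mem_univ k)

lemma comps_eq_filter_piAntidiag (m s : ℕ) :
    comps m s = (piAntidiag univ s).filter fun γ => ∀ k, 1 ≤ γ k := by
  ext γ
  simp [mem_comps, and_comm]

lemma comps_eq_empty {m s : ℕ} (h : s < m) : comps m s = ∅ := by
  refine eq_empty_of_forall_notMem fun γ hγ => ?_
  obtain ⟨hpos, hsum⟩ := mem_comps.1 hγ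
  have : ∑ _k : Fin m, 1 ≤ ∑ k, γ k := sum_le_sum fun k _ => hpos k
  simp at this
  omega

lemma P_eq_zero_of_lt {i m : ℕ} (j : ℕ) (γ : Fin m → ℕ) (h : i < m) : P i j γ = 0 := by
  simp [P, comps_eq_empty h]

lemma sum_comps_product_eq_sum_P_smul {M : Type*} [AddCommMonoid M] {m : ℕ}
    (F : (Fin m → ℕ) → M) (i j : ℕ) :
    ∑ p ∈ comps m i ×ˢ comps m j, F (fun k => p.1 k + p.2 k - 1)
      = ∑ γ ∈ comps m (i + j - m), P i j γ • F γ := by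
  have hmaps : ∀ p ∈ comps m i ×ˢ comps m j,
      (fun k => p.1 k + p.2 k - 1) ∈ comps m (i + j - m) := by
    intro p hp
    simp only [mem_product, mem_comps] at hp ⊢
    obtain ⟨⟨hpos₁, hsum₁⟩, hpos₂, hsum₂⟩ := hp
    refine ⟨fun k => by have := hpos₁ k; have := hpos₂ k; omega, ?_⟩
    have hsum : ∑ k, (p.1 k + p.2 k - 1) + ∑ _k : Fin m, 1 = i + j := by
      rw [← sum_add_distrib, ← hsum₁, ← hsum₂, ← sum_add_distrib]
      exact sum_congr rfl fun k _ => by have := hpos₁ k; omega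
    simp only [sum_const, card_univ, Fintype.card_fin, smul_eq_mul, mul_one] at hsum
    omega
  rw [← sum_fiberwise_of_maps_to hmaps]
  refine sum_congr rfl fun γ _ => ?_
  rw [P, ← sum_const]
  refine sum_congr (filter_congr fun p hp => ?_) fun p hp => ?_
  · simp only [mem_product, mem_comps] at hp
    simp only [funext_iff]
    exact forall_congr' fun k => by have := hp.1.1 k; omega
  · exact congrArg F (funext fun k => by have := (mem_filter.1 hp).2 k; omega)

end Comps

section Coefficients

variable {S : Type*} [CommSemiring S]

lemma coeff_prod_fin {m : ℕ} (φ : Fin m → S⟦X⟧) (n : ℕ) :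
    coeff n (∏ k, φ k) = ∑ l ∈ piAntidiag univ n, ∏ k, coeff (l k) (φ k) := by
  rw [coeff_prod]
  exact sum_equiv Finsupp.equivFunOnFinite (by simp) (by simp)

lemma coeff_coeff_pow (F : S⟦X⟧⟦X⟧) (m i j : ℕ) :
    coeff j (coeff i (F ^ m))
      = ∑ a ∈ piAntidiag univ i, ∑ b ∈ piAntidiag univ j,
          ∏ k : Fin m, coeff (b k) (coeff (a k) F) := by
  rw [← Fin.prod_const, coeff_prod_fin, map_sum]
  simp_rw [coeff_prod_fin]

end Coefficients

section DiffQuot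

variable {S : Type*} [CommRing S]

/-- `∑_{n,m ≥ 1} g (n + m - 1) vⁿ uᵐ`, i.e. `u v (G(u) - G(v)) / (u - v)` for
`G(u) = ∑_{k ≥ 1} g k uᵏ`; `v` is the outer and `u` the inner variable. -/
noncomputable def diffQuotSeries (g : ℕ → S) : S⟦X⟧⟦X⟧ :=
  mk fun n => mk fun m => if n = 0 ∨ m = 0 then 0 else g (n + m - 1)

lemma coeff_coeff_diffQuotSeries (g : ℕ → S) (n m : ℕ) :
    coeff m (coeff n (diffQuotSeries g)) = if n = 0 ∨ m = 0 then 0 else g (n + m - 1) := by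
  simp [diffQuotSeries]

lemma constantCoeff_diffQuotSeries (g : ℕ → S) : constantCoeff (diffQuotSeries g) = 0 := by
  ext m
  rw [← coeff_zero_eq_constantCoeff_apply, coeff_coeff_diffQuotSeries]
  simp

lemma coeff_coeff_diffQuotSeries_pow (g : ℕ → S) (m i j : ℕ) :
    coeff j (coeff i (diffQuotSeries g ^ m))
      = ∑ p ∈ comps m i ×ˢ comps m j, ∏ k, g (p.1 k + p.2 k - 1) := by
  rw [coeff_coeff_pow, ← sum_product', comps_eq_filter_piAntidiag,
    comps_eq_filter_piAntidiag, ← filter_product]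
  refine (sum_filter_of_ne fun p _ hne => ?_).symm.trans
    (sum_congr rfl fun p hp => prod_congr rfl fun k _ => ?_)
  · constructor <;> intro k <;> by_contra! hk <;>
      exact hne (prod_eq_zero (mem_univ k) (by
        rw [coeff_coeff_diffQuotSeries, if_pos (by omega)]))
  · rw [mem_filter] at hp
    rw [coeff_coeff_diffQuotSeries, if_neg]
    have := hp.2.1 k; have := hp.2.2 k; omega

lemma coeff_coeff_logOneAdd_diffQuotSeries [Algebra ℚ S] (g : ℕ → S) (i j : ℕ) :
    coeff j (coeff i (logOneAdd (diffQuotSeries g)))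
      = ∑ m ∈ Icc 1 (i + j), ∑ γ ∈ comps m (i + j - m),
          (((-1 : ℚ) ^ (m - 1) / (m : ℚ)) * (P i j γ : ℚ)) • ∏ k, g (γ k) := by
  set F : ℕ → S := fun m => ∑ γ ∈ comps m (i + j - m),
    (((-1 : ℚ) ^ (m - 1) / (m : ℚ)) * (P i j γ : ℚ)) • ∏ k, g (γ k)
  have hF : ∀ m, m = 0 ∨ i < m → F m = 0 := by
    rintro m (rfl | hm)
    · simp [F]
    · simp [F, P_eq_zero_of_lt j _ hm]
  have hcoeff : coeff j (coeff i (logOneAdd (diffQuotSeries g)))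
      = ∑ m ∈ range (i + 1), F m := by
    simp only [logOneAdd, compSeries, coeff_mk, map_sum, coeff_smul,
      coeff_coeff_diffQuotSeries_pow, sum_comps_product_eq_sum_P_smul (fun γ => ∏ k, g (γ k)),
      smul_sum, F, mul_smul, Nat.cast_smul_eq_nsmul]
  rw [hcoeff, ← sum_subset (s₁ := Icc 1 i) (fun m hm => by simp at hm ⊢; omega)
      fun m _ hm => hF m (by simp at hm; omega)]
  exact sum_subset (fun m hm => by simp at hm ⊢; omega)
    fun m hm hm' => hF m (by simp at hm hm'; omega)

end DiffQuot

lemma X_sub_C_X_mul_one_add_diffQuotSeries {S : Type*} [CommRing S] (d : ℕ → S → S) (x : S) :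
    (X - C (R := S⟦X⟧) X) * (1 + diffQuotSeries fun n => d n x)
      = (X - C (R := S⟦X⟧) X)
        - X * C (R := S⟦X⟧) X * (C (R := S⟦X⟧) (Dop' d x) - map (C (R := S)) (Dop' d x)) := by
  ext n m
  rcases n with _ | _ | n <;> rcases m with _ | _ | m <;>
    simp only [mul_assoc, mul_add, mul_one, sub_mul, map_sub, map_add, coeff_zero_X_mul,
      coeff_succ_X_mul, coeff_C_mul, coeff_C, coeff_map, coeff_X, Dop', coeff_mk,
      coeff_coeff_diffQuotSeries] <;>
    simp [← add_assoc, Nat.add_right_comm _ 1]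

lemma X_sub_C_X_mem_nonZeroDivisors {S : Type*} [CommRing S] :
    (X - C (R := S⟦X⟧) X : S⟦X⟧⟦X⟧) ∈ nonZeroDivisors (S⟦X⟧⟦X⟧) := by
  refine MvPowerSeries.mem_nonZeroDivisors_of_constantCoeff ?_
  have h : constantCoeff (X - C (R := S⟦X⟧) X : S⟦X⟧⟦X⟧) = -1 * X := by simp
  rw [show MvPowerSeries.constantCoeff (X - C (R := S⟦X⟧) X : S⟦X⟧⟦X⟧) = _ from h]
  exact Submonoid.mul_mem _ isUnit_one.neg.mem_nonZeroDivisors MvPowerSeries.X_mem_nonzeroDivisors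

lemma expPS_DD'_eq_one_add_diffQuotSeries (d : ℕ → R → R) (f : R)
    (hFay : (X - C (R := R⟦X⟧) X) * expPS (DD' d f)
        = (X - C (R := R⟦X⟧) X) - X * C (R := R⟦X⟧) X
              * (C (R := R⟦X⟧) (Dop' d (d 1 f)) - map (C (R := R)) (Dop' d (d 1 f)))) :
    expPS (DD' d f) = 1 + diffQuotSeries fun n => d n (d 1 f) := by
  rw [← X_sub_C_X_mul_one_add_diffQuotSeries] at hFay
  exact (mul_cancel_left_mem_nonZeroDivisors (X_sub_C_X_mem_nonZeroDivisors (S := R))).1 hFay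

lemma constantCoeff_DD' {S : Type*} [CommRing S] (d : ℕ → S → S) (f : S) :
    constantCoeff (DD' d f) = 0 := by
  ext m
  rw [← coeff_zero_eq_constantCoeff_apply, DD', coeff_mk, coeff_mk]
  simp

/-- extracting the coefficient of `z^{-i} w^{-j}` from the
dispersionless KP Fay identity `e^{D(z)D(w)f} = 1 - (D(z)∂_1f - D(w)∂_1f)/(z-w)`
(stated in denominator-cleared form, after the change of variables `t_k → t_k/k`)
yields the flows
`∂_i∂_j f = ∑_{m≥1} ((-1)^{m-1}/m) ∑_{γ_1+⋯+γ_m=i+j-m} P_{ij}(γ) ∏_k ∂_1∂_{γ_k} f`. -/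
theorem KP_Fay_flows (d : ℕ → R → R) (f : R)
    (hcomm : ∀ k l x, d k (d l x) = d l (d k x))
    (hFay : (PowerSeries.X - PowerSeries.C (R := PowerSeries R) PowerSeries.X) * expPS (DD' d f)
        = (PowerSeries.X - PowerSeries.C (R := PowerSeries R) PowerSeries.X)
          - PowerSeries.X * PowerSeries.C (R := PowerSeries R) PowerSeries.X
              * (PowerSeries.C (R := PowerSeries R) (Dop' d (d 1 f))
                  - PowerSeries.map (PowerSeries.C (R := R)) (Dop' d (d 1 f)))) :
    ∀ i j, 1 ≤ i → 1 ≤ j →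
      d i (d j f)
        = ∑ m ∈ Finset.Icc 1 (i + j), ∑ γ ∈ comps m (i + j - m),
            (((-1 : ℚ) ^ (m - 1) / (m : ℚ)) * (P i j γ : ℚ)) • ∏ k, d 1 (d (γ k) f) := by
  intro i j hi hj
  have hlog : DD' d f = logOneAdd (diffQuotSeries fun n => d n (d 1 f)) :=
    eq_logOneAdd_of_expPS_eq (constantCoeff_DD' d f) (constantCoeff_diffQuotSeries _)
      (expPS_DD'_eq_one_add_diffQuotSeries d f hFay)
  have hg : (fun n => d n (d 1 f)) = fun n => d 1 (d n f) := funext fun n => hcomm n 1 f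
  calc d i (d j f) = coeff j (coeff i (DD' d f)) := by
        simp [DD', Nat.one_le_iff_ne_zero.1 hi, Nat.one_le_iff_ne_zero.1 hj]
    _ = _ := by rw [hlog, hg, coeff_coeff_logOneAdd_diffQuotSeries]
end
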